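/- Maximality of M↑ among dominating repairs: let M be a stable matching with closed subset S and (m,w) ∈ M with producing rotation ρ_p, and let M↑ be the stable matching of the closed subset S↑ = S \ ({ρ_p} ∪ (succ(ρ_p) ∩ S)). If Mx is any stable matching not containing (m,w) that dominates M and differs from M↑, then Mx dominates M↑; i.e., there is no stable matching strictly between M↑ and M avoiding the pair (m,w). -/

import Mathlib

/-- A stable-marriage instance with `n` men and `n` women: each man `m` ranks the
women via `mrank m` (lower rank = more preferred), each woman `w` ranks the men
via `wrank w`; rankings are strict, i.e. injective. -/
structure SMInst (n : ℕ) where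
  mrank : Fin n → Fin n → ℕ
  wrank : Fin n → Fin n → ℕ
  mrank_inj : ∀ m, Function.Injective (mrank m)
  wrank_inj : ∀ w, Function.Injective (wrank w)

namespace SMInst

variable {n : ℕ} (I : SMInst n)

/-- A matching is a bijection from men to women; the pair `(m, w)` blocks `M` if `m`
strictly prefers `w` to his partner `M m` and `w` strictly prefers `m` to her partner. -/
def Blocks (M : Fin n ≃ Fin n) (m w : Fin n) : Prop :=
  I.mrank m w < I.mrank m (M m) ∧ I.wrank w m < I.wrank w (M.symm w)

/-- A matching is stable iff it admits no blocking pair. -/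
def IsStable (M : Fin n ≃ Fin n) : Prop :=
  ∀ m w, ¬ I.Blocks M m w

/-- `M₁ ⪯ M₂` : every man weakly prefers his partner in `M₁` to his partner in `M₂`. -/
def Dominates (M₁ M₂ : Fin n ≃ Fin n) : Prop :=
  ∀ m, I.mrank m (M₁ m) ≤ I.mrank m (M₂ m)

/-- The man-optimal stable matching (the output of men-proposing Gale–Shapley):
stable and dominating every stable matching. -/
def IsManOptimal (M₀ : Fin n ≃ Fin n) : Prop :=
  I.IsStable M₀ ∧ ∀ M, I.IsStable M → I.Dominates M₀ M

/-- The woman-optimal (man-pessimal) stable matching. -/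
def IsWomanOptimal (Mz : Fin n ≃ Fin n) : Prop :=
  I.IsStable Mz ∧ ∀ M, I.IsStable M → I.Dominates M Mz

/-- `d(M, M')` : the number of men with different partners in `M` and `M'`. -/
def mdist (M M' : Fin n ≃ Fin n) : ℕ :=
  let _ := I
  (Finset.univ.filter fun m => M m ≠ M' m).card

/-- `L` is a rotation exposed in `M`: a cyclic list of at least two pairs `(mᵢ, wᵢ)` of `M`
with distinct men, such that `w_{i+1}` is the first woman strictly below `wᵢ` on `mᵢ`'s
list who prefers `mᵢ` to her `M`-partner. -/
def ExposedIn (M : Fin n ≃ Fin n) (L : List (Fin n × Fin n)) : Prop :=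
  2 ≤ L.length ∧ (L.map Prod.fst).Nodup ∧ (∀ p ∈ L, M p.1 = p.2) ∧
  ∀ i : Fin L.length,
    I.mrank (L.get i).1 (L.get i).2 <
      I.mrank (L.get i).1 (L.get ⟨(i.1 + 1) % L.length, Nat.mod_lt _ i.pos⟩).2 ∧
    I.wrank (L.get ⟨(i.1 + 1) % L.length, Nat.mod_lt _ i.pos⟩).2 (L.get i).1 <
      I.wrank (L.get ⟨(i.1 + 1) % L.length, Nat.mod_lt _ i.pos⟩).2
        (L.get ⟨(i.1 + 1) % L.length, Nat.mod_lt _ i.pos⟩).1 ∧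
    ∀ w, I.mrank (L.get i).1 (L.get i).2 < I.mrank (L.get i).1 w →
      I.mrank (L.get i).1 w <
        I.mrank (L.get i).1 (L.get ⟨(i.1 + 1) % L.length, Nat.mod_lt _ i.pos⟩).2 →
      ¬ I.wrank w (L.get i).1 < I.wrank w (M.symm w)

/-- `M'` is obtained from `M` by eliminating the rotation `L` exposed in `M`:
each man `mᵢ` of `L` moves to `w_{i+1}`, all other men keep their partners. -/
def Elim (M M' : Fin n ≃ Fin n) (L : List (Fin n × Fin n)) : Prop :=
  I.ExposedIn M L ∧
  (∀ i : Fin L.length,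
    M' (L.get i).1 = (L.get ⟨(i.1 + 1) % L.length, Nat.mod_lt _ i.pos⟩).2) ∧
  ∀ m : Fin n, m ∉ L.map Prod.fst → M' m = M m

/-- `ElimSeq M Ls M'` : applying the rotations of `Ls` in order starting from `M` yields `M'`. -/
def ElimSeq : (Fin n ≃ Fin n) → List (List (Fin n × Fin n)) → (Fin n ≃ Fin n) → Prop
  | M, [], M' => M' = M
  | M, L :: Ls, M' => ∃ Mmid, I.Elim M Mmid L ∧ ElimSeq Mmid Ls M'

/-- A rotation of the instance: a cyclic list exposed in some stable matching. -/
def IsRotation (L : List (Fin n × Fin n)) : Prop :=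
  ∃ M, I.IsStable M ∧ I.ExposedIn M L

/-- `ρ' ≪ ρ` : `ρ'` is eliminated in every sequence of rotation eliminations starting at
the man-optimal matching `M₀` and ending at a stable matching in which `ρ` is exposed.
(Rotations are identified up to their sets of pairs.) -/
def Precedes (L' L : List (Fin n × Fin n)) : Prop :=
  ∀ M₀ Ls M, I.IsManOptimal M₀ → I.ElimSeq M₀ Ls M → I.IsStable M → I.ExposedIn M L →
    ∃ K ∈ Ls, K.toFinset = L'.toFinset

/-- The rotation `L` produces the pair `(m, w)` : eliminating `L` matches `m` to `w`. -/
def Produces (L : List (Fin n × Fin n)) (m w : Fin n) : Prop :=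
  let _ := I
  ∃ i : Fin L.length,
    (L.get i).1 = m ∧ (L.get ⟨(i.1 + 1) % L.length, Nat.mod_lt _ i.pos⟩).2 = w

/-- The set of rotations of the instance, identified with their sets of pairs. -/
def RotSet : Set (Finset (Fin n × Fin n)) :=
  {R | ∃ L, I.IsRotation L ∧ L.toFinset = R}

/-- Precedence of rotations, on rotations-as-sets-of-pairs. -/
def PrecedesR (R' R : Finset (Fin n × Fin n)) : Prop :=
  ∃ L' L, I.IsRotation L' ∧ I.IsRotation L ∧ L'.toFinset = R' ∧ L.toFinset = R ∧
    I.Precedes L' L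

/-- Closed subsets (down-sets) of the rotation poset. -/
def IsClosedF (S : Finset (Finset (Fin n × Fin n))) : Prop :=
  (∀ R ∈ S, R ∈ I.RotSet) ∧ ∀ R ∈ S, ∀ R' ∈ I.RotSet, I.PrecedesR R' R → R' ∈ S

/-- `X(T)` : the set of men involved in at least one rotation of `T`. -/
def menOf (T : Finset (Finset (Fin n × Fin n))) : Finset (Fin n) :=
  let _ := I
  T.biUnion fun R => R.image Prod.fst

/-- The stable matching corresponding to the closed subset `S`: obtained from `M₀` by
eliminating the rotations of `S`, each exactly once, in some valid order. -/
def Corresponds (M₀ : Fin n ≃ Fin n) (S : Finset (Finset (Fin n × Fin n)))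
    (M : Fin n ≃ Fin n) : Prop :=
  ∃ Ls : List (List (Fin n × Fin n)),
    (Ls.map List.toFinset).Nodup ∧ (Ls.map List.toFinset).toFinset = S ∧
    I.ElimSeq M₀ Ls M

end SMInst

namespace SMInst

variable {n : ℕ} {I : SMInst n}

/-- successor index in a cyclic list -/
def nxt (L : List (Fin n × Fin n)) (i : Fin L.length) : Fin L.length :=
  ⟨(i.1 + 1) % L.length, Nat.mod_lt _ i.pos⟩

/-- index shifted by k -/
def adk (L : List (Fin n × Fin n)) (i : Fin L.length) (k : ℕ) : Fin L.length :=
  ⟨(i.1 + k) % L.length, Nat.mod_lt _ i.pos⟩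

theorem adk_zero (L : List (Fin n × Fin n)) (i : Fin L.length) : adk L i 0 = i := by
  simp [adk, Nat.mod_eq_of_lt i.2]

theorem adk_succ (L : List (Fin n × Fin n)) (i : Fin L.length) (k : ℕ) :
    adk L i (k+1) = nxt L (adk L i k) := by
  simp [adk, nxt, Nat.mod_add_mod, Nat.add_assoc]

theorem adk_surj (L : List (Fin n × Fin n)) (i a : Fin L.length) :
    ∃ k, adk L i k = a := by
  refine ⟨a.1 + L.length - i.1, ?_⟩
  have hi : i.1 ≤ L.length := le_of_lt i.2
  have : i.1 + (a.1 + L.length - i.1) = a.1 + L.length := by omega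
  simp only [adk, this]
  ext
  simp [Nat.add_mod_right, Nat.mod_eq_of_lt a.2]

section exposed

variable {M : Fin n ≃ Fin n} {L : List (Fin n × Fin n)}

theorem ExposedIn.len2 (h : I.ExposedIn M L) : 2 ≤ L.length := h.1

theorem ExposedIn.ndfst (h : I.ExposedIn M L) : (L.map Prod.fst).Nodup := h.2.1

theorem ExposedIn.matched (h : I.ExposedIn M L) : ∀ p ∈ L, M p.1 = p.2 := h.2.2.1

theorem ExposedIn.cond1 (h : I.ExposedIn M L) (i : Fin L.length) :
    I.mrank (L.get i).1 (L.get i).2 < I.mrank (L.get i).1 (L.get (nxt L i)).2 :=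
  (h.2.2.2 i).1

theorem ExposedIn.cond2 (h : I.ExposedIn M L) (i : Fin L.length) :
    I.wrank (L.get (nxt L i)).2 (L.get i).1 < I.wrank (L.get (nxt L i)).2 (L.get (nxt L i)).1 :=
  (h.2.2.2 i).2.1

theorem ExposedIn.cond3 (h : I.ExposedIn M L) (i : Fin L.length) (w : Fin n)
    (h1 : I.mrank (L.get i).1 (L.get i).2 < I.mrank (L.get i).1 w)
    (h2 : I.mrank (L.get i).1 w < I.mrank (L.get i).1 (L.get (nxt L i)).2) :
    ¬ I.wrank w (L.get i).1 < I.wrank w (M.symm w) :=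
  (h.2.2.2 i).2.2 w h1 h2

theorem ExposedIn.of_conds (h1 : 2 ≤ L.length) (h2 : (L.map Prod.fst).Nodup)
    (h3 : ∀ p ∈ L, M p.1 = p.2)
    (h4 : ∀ i : Fin L.length,
      I.mrank (L.get i).1 (L.get i).2 < I.mrank (L.get i).1 (L.get (nxt L i)).2 ∧
      I.wrank (L.get (nxt L i)).2 (L.get i).1 <
        I.wrank (L.get (nxt L i)).2 (L.get (nxt L i)).1 ∧
      ∀ w, I.mrank (L.get i).1 (L.get i).2 < I.mrank (L.get i).1 w →
        I.mrank (L.get i).1 w < I.mrank (L.get i).1 (L.get (nxt L i)).2 →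
        ¬ I.wrank w (L.get i).1 < I.wrank w (M.symm w)) : I.ExposedIn M L :=
  ⟨h1, h2, h3, h4⟩

theorem ExposedIn.symm_eq (h : I.ExposedIn M L) {p : Fin n × Fin n} (hp : p ∈ L) :
    M.symm p.2 = p.1 := by
  have := h.matched p hp; exact (Equiv.symm_apply_eq M).2 this.symm

/-- `w` is a candidate for the next woman of man `m` in matching `M`. -/
def Cand (I : SMInst n) (M : Fin n ≃ Fin n) (m w : Fin n) : Prop :=
  I.mrank m (M m) < I.mrank m w ∧ I.wrank w m < I.wrank w (M.symm w)

/-- `w` is THE next woman of man `m` in matching `M`. -/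
def IsNext (I : SMInst n) (M : Fin n ≃ Fin n) (m w : Fin n) : Prop :=
  I.Cand M m w ∧ ∀ w', I.Cand M m w' → I.mrank m w ≤ I.mrank m w'

theorem isNext_unique {m w₁ w₂ : Fin n} (h1 : I.IsNext M m w₁) (h2 : I.IsNext M m w₂) :
    w₁ = w₂ := by
  have := h1.2 w₂ h2.1
  have := h2.2 w₁ h1.1
  exact I.mrank_inj m (le_antisymm ‹_› ‹_›)

theorem exposed_isNext (h : I.ExposedIn M L) (i : Fin L.length) :
    I.IsNext M (L.get i).1 (L.get (nxt L i)).2 := by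
  have hm : M (L.get i).1 = (L.get i).2 := h.matched _ (L.get_mem i)
  constructor
  · constructor
    · rw [hm]; exact h.cond1 i
    · have hs : M.symm (L.get (nxt L i)).2 = (L.get (nxt L i)).1 :=
        h.symm_eq (L.get_mem (nxt L i))
      rw [hs]; exact h.cond2 i
  · intro w' hw'
    by_contra hlt
    push_neg at hlt
    have h1 : I.mrank (L.get i).1 (L.get i).2 < I.mrank (L.get i).1 w' := by
      rw [← hm]; exact hw'.1
    exact h.cond3 i w' h1 hlt hw'.2


theorem get_mem' (L : List (Fin n × Fin n)) (i : Fin L.length) : L.get i ∈ L :=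
  L.get_mem i

/-- two rotations exposed in the same matching agree from a common pair onwards -/
theorem sync {L' : List (Fin n × Fin n)}
    (hL : I.ExposedIn M L) (hL' : I.ExposedIn M L') (i : Fin L.length)
    (j : Fin L'.length) (hij : L.get i = L'.get j) (k : ℕ) :
    L.get (adk L i k) = L'.get (adk L' j k) := by
  induction k with
  | zero => rwa [adk_zero, adk_zero]
  | succ k ih =>
    rw [adk_succ, adk_succ]
    set a := adk L i k
    set b := adk L' j k
    have hfst : (L.get a).1 = (L'.get b).1 := by rw [ih]
    have h1 := exposed_isNext hL a
    have h2 := exposed_isNext hL' b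
    rw [hfst] at h1
    have hsnd : (L.get (nxt L a)).2 = (L'.get (nxt L' b)).2 := isNext_unique h1 h2
    have hf1 : M.symm (L.get (nxt L a)).2 = (L.get (nxt L a)).1 :=
      hL.symm_eq (get_mem' _ _)
    have hf2 : M.symm (L'.get (nxt L' b)).2 = (L'.get (nxt L' b)).1 :=
      hL'.symm_eq (get_mem' _ _)
    have : (L.get (nxt L a)).1 = (L'.get (nxt L' b)).1 := by
      rw [← hf1, ← hf2, hsnd]
    exact Prod.ext this hsnd

/-- two rotations exposed in the same matching sharing a man coincide as sets -/
theorem toFinset_eq_of_common_man {L' : List (Fin n × Fin n)}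
    (hL : I.ExposedIn M L) (hL' : I.ExposedIn M L') (i : Fin L.length)
    (j : Fin L'.length) (hij : (L.get i).1 = (L'.get j).1) :
    L.toFinset = L'.toFinset := by
  have hpair : L.get i = L'.get j := by
    have h1 : M (L.get i).1 = (L.get i).2 := hL.matched _ (get_mem' _ _)
    have h2 : M (L'.get j).1 = (L'.get j).2 := hL'.matched _ (get_mem' _ _)
    refine Prod.ext hij ?_
    rw [← h1, ← h2, hij]
  apply Finset.ext
  intro p
  simp only [List.mem_toFinset]
  constructor
  · intro hp
    obtain ⟨a, rfl⟩ := List.get_of_mem hp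
    obtain ⟨k, hk⟩ := adk_surj L i a
    rw [← hk, sync hL hL' i j hpair k]
    exact get_mem' _ _
  · intro hp
    obtain ⟨b, rfl⟩ := List.get_of_mem hp
    obtain ⟨k, hk⟩ := adk_surj L' j b
    rw [← hk, ← sync hL hL' i j hpair k]
    exact get_mem' _ _

/-- if two rotations exposed in the same matching have different sets of pairs,
their men are disjoint -/
theorem disjoint_men_of_ne {L' : List (Fin n × Fin n)}
    (hL : I.ExposedIn M L) (hL' : I.ExposedIn M L')
    (hne : L.toFinset ≠ L'.toFinset) {m : Fin n}
    (h1 : m ∈ L.map Prod.fst) (h2 : m ∈ L'.map Prod.fst) : False := by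
  obtain ⟨p, hp, rfl⟩ := List.mem_map.1 h1
  obtain ⟨q, hq, hqe⟩ := List.mem_map.1 h2
  obtain ⟨a, rfl⟩ := List.get_of_mem hp
  obtain ⟨b, rfl⟩ := List.get_of_mem hq
  exact hne (toFinset_eq_of_common_man hL hL' a b hqe.symm)


/-- transfer: a rotation with the same pair set exposed elsewhere is exposed here too -/
theorem isNext_transfer {L' : List (Fin n × Fin n)} {N'' : Fin n ≃ Fin n}
    (hL : I.ExposedIn M L) (hL' : I.ExposedIn N'' L')
    (hset : L.toFinset = L'.toFinset) (j : Fin L'.length) :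
    I.IsNext M (L'.get j).1 (L'.get (nxt L' j)).2 := by
  have hmem : ∀ p ∈ L', p ∈ L := fun p hp =>
    List.mem_toFinset.1 (hset ▸ List.mem_toFinset.2 hp)
  have hmem' : ∀ p ∈ L, p ∈ L' := fun p hp =>
    List.mem_toFinset.1 (hset.symm ▸ List.mem_toFinset.2 hp)
  obtain ⟨i, hi⟩ := List.get_of_mem (hmem (L'.get j) (get_mem' _ _))
  have hN : M (L'.get j).1 = (L'.get j).2 := hL.matched _ (hmem _ (get_mem' _ _))
  have hN'' : N'' (L'.get j).1 = (L'.get j).2 := hL'.matched _ (get_mem' _ _)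
  have hNA : I.IsNext M (L'.get j).1 (L.get (nxt L i)).2 := by
    have := exposed_isNext hL i; rwa [hi] at this
  have hN''B : I.IsNext N'' (L'.get j).1 (L'.get (nxt L' j)).2 := exposed_isNext hL' j
  -- the next pairs of both lists have the same partner in both matchings
  have hsymA : M.symm (L.get (nxt L i)).2 = (L.get (nxt L i)).1 :=
    hL.symm_eq (get_mem' _ _)
  have hsymA'' : N''.symm (L.get (nxt L i)).2 = (L.get (nxt L i)).1 :=
    hL'.symm_eq (hmem' _ (get_mem' _ _))
  have hsymB : M.symm (L'.get (nxt L' j)).2 = (L'.get (nxt L' j)).1 :=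
    hL.symm_eq (hmem _ (get_mem' _ _))
  have hsymB'' : N''.symm (L'.get (nxt L' j)).2 = (L'.get (nxt L' j)).1 :=
    hL'.symm_eq (get_mem' _ _)
  have hcandB : I.Cand M (L'.get j).1 (L'.get (nxt L' j)).2 := by
    constructor
    · rw [hN]; have := hN''B.1.1; rwa [hN''] at this
    · rw [hsymB]; have := hN''B.1.2; rwa [hsymB''] at this
  have hcandA : I.Cand N'' (L'.get j).1 (L.get (nxt L i)).2 := by
    constructor
    · rw [hN'']; have := hNA.1.1; rwa [hN] at this
    · rw [hsymA'']; have := hNA.1.2; rwa [hsymA] at this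
  have h1 := hNA.2 _ hcandB
  have h2 := hN''B.2 _ hcandA
  have hAB : (L.get (nxt L i)).2 = (L'.get (nxt L' j)).2 :=
    I.mrank_inj _ (le_antisymm h1 h2)
  rw [hAB] at hNA
  exact hNA

theorem exposed_transfer {L' : List (Fin n × Fin n)} {N'' : Fin n ≃ Fin n}
    (hL : I.ExposedIn M L) (hL' : I.ExposedIn N'' L')
    (hset : L.toFinset = L'.toFinset) : I.ExposedIn M L' := by
  have hmem : ∀ p ∈ L', p ∈ L := fun p hp =>
    List.mem_toFinset.1 (hset ▸ List.mem_toFinset.2 hp)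
  refine ExposedIn.of_conds hL'.len2 hL'.ndfst (fun p hp => hL.matched p (hmem p hp)) ?_
  intro j
  have hNB := isNext_transfer hL hL' hset j
  have hN : M (L'.get j).1 = (L'.get j).2 := hL.matched _ (hmem _ (get_mem' _ _))
  have hsymB : M.symm (L'.get (nxt L' j)).2 = (L'.get (nxt L' j)).1 :=
    hL.symm_eq (hmem _ (get_mem' _ _))
  refine ⟨?_, ?_, ?_⟩
  · rw [← hN]; exact hNB.1.1
  · rw [← hsymB]; exact hNB.1.2
  · intro w hw1 hw2 hw3
    have : I.Cand M (L'.get j).1 w := ⟨by rwa [hN], hw3⟩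
    exact absurd (hNB.2 w this) (not_le.2 hw2)


/-- the permutation of women induced by a rotation -/
def elimPerm (L : List (Fin n × Fin n)) : Equiv.Perm (Fin n) :=
  (L.map Prod.snd).formPerm

theorem ExposedIn.ndsnd (h : I.ExposedIn M L) : (L.map Prod.snd).Nodup := by
  have : L.map Prod.snd = (L.map Prod.fst).map M := by
    rw [List.map_map]
    exact List.map_congr_left fun p hp => (h.matched p hp).symm
  rw [this]
  exact h.ndfst.map M.injective

theorem elimPerm_apply (h : I.ExposedIn M L) (i : Fin L.length) :
    elimPerm L (L.get i).2 = (L.get (nxt L i)).2 := by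
  have hlen : (L.map Prod.snd).length = L.length := L.length_map _
  have h1 : (L.map Prod.snd)[(i : ℕ)]'(by omega) = (L.get i).2 := by
    simp [List.getElem_map]
  have := List.formPerm_apply_getElem (L.map Prod.snd) h.ndsnd i (by omega)
  rw [h1] at this
  rw [elimPerm, this]
  simp [List.getElem_map, nxt, hlen]

theorem elimPerm_fix (w : Fin n) (hw : w ∉ L.map Prod.snd) : elimPerm L w = w :=
  List.formPerm_apply_of_notMem hw

theorem mem_snd_of_partner (h : I.ExposedIn M L) {m : Fin n}
    (hm : m ∈ L.map Prod.fst) : M m ∈ L.map Prod.snd := by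
  obtain ⟨p, hp, rfl⟩ := List.mem_map.1 hm
  rw [h.matched p hp]
  exact List.mem_map.2 ⟨p, hp, rfl⟩

theorem not_mem_snd (h : I.ExposedIn M L) {m : Fin n}
    (hm : m ∉ L.map Prod.fst) : M m ∉ L.map Prod.snd := by
  intro hc
  obtain ⟨p, hp, hpe⟩ := List.mem_map.1 hc
  have := h.matched p hp
  rw [← this] at hpe
  exact hm (List.mem_map.2 ⟨p, hp, M.injective hpe⟩)

theorem Elim.exposed {L : List (Fin n × Fin n)} (h : I.Elim M M' L) : I.ExposedIn M L := h.1

theorem Elim.moves {L : List (Fin n × Fin n)} (h : I.Elim M M' L) (i : Fin L.length) :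
    M' (L.get i).1 = (L.get (nxt L i)).2 := h.2.1 i

theorem Elim.fixes {L : List (Fin n × Fin n)} (h : I.Elim M M' L) {m : Fin n}
    (hm : m ∉ L.map Prod.fst) : M' m = M m := h.2.2 m hm

theorem elim_eq_trans (h : I.Elim M M' L) : M' = M.trans (elimPerm L) := by
  ext m
  by_cases hm : m ∈ L.map Prod.fst
  · obtain ⟨p, hp, rfl⟩ := List.mem_map.1 hm
    obtain ⟨i, rfl⟩ := List.get_of_mem hp
    have h1 := h.moves i
    have h2 : M (L.get i).1 = (L.get i).2 := h.exposed.matched _ (get_mem' _ _)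
    simp only [Equiv.trans_apply, h2, h1, elimPerm_apply h.exposed i]
  · simp only [Equiv.trans_apply, h.fixes hm,
      elimPerm_fix _ (not_mem_snd h.exposed hm)]

theorem elim_of_exposed (h : I.ExposedIn M L) : I.Elim M (M.trans (elimPerm L)) L := by
  refine ⟨h, fun i => ?_, fun m hm => ?_⟩
  · have h2 : M (L.get i).1 = (L.get i).2 := h.matched _ (get_mem' _ _)
    simp only [Equiv.trans_apply, h2, elimPerm_apply h i]
    rfl
  · simp only [Equiv.trans_apply, elimPerm_fix _ (not_mem_snd h hm)]

theorem elim_unique {M₁ M₂ : Fin n ≃ Fin n} (h1 : I.Elim M M₁ L) (h2 : I.Elim M M₂ L) :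
    M₁ = M₂ := by rw [elim_eq_trans h1, elim_eq_trans h2]

/-- eliminating rotations with the same pair set gives the same result -/
theorem elim_congr {K : List (Fin n × Fin n)} (h1 : I.Elim M M' L)
    (hK : I.ExposedIn M K) (hset : K.toFinset = L.toFinset) : I.Elim M M' K := by
  have hL := h1.exposed
  refine ⟨hK, fun i => ?_, fun m hm => ?_⟩
  · -- K.get i is a pair of L as well
    have hmem : K.get i ∈ L := by
      have : K.get i ∈ K := get_mem' _ _
      exact List.mem_toFinset.1 (hset ▸ List.mem_toFinset.2 this)
    obtain ⟨a, ha⟩ := List.get_of_mem hmem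
    have hfst : (L.get a).1 = (K.get i).1 := by rw [ha]
    have hn1 := exposed_isNext hL a
    have hn2 := exposed_isNext hK i
    rw [hfst] at hn1
    have heq : (L.get (nxt L a)).2 = (K.get (nxt K i)).2 := isNext_unique hn1 hn2
    show M' (K.get i).1 = (K.get (nxt K i)).2
    rw [← heq, ← hfst]
    exact h1.moves a
  · apply h1.fixes
    intro hc
    apply hm
    obtain ⟨p, hp, hpe⟩ := List.mem_map.1 hc
    have : p ∈ K := List.mem_toFinset.1 (hset.symm ▸ List.mem_toFinset.2 hp)
    exact List.mem_map.2 ⟨p, this, hpe⟩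

/-- men get (weakly) worse under elimination -/
theorem elim_rank_le (h : I.Elim M M' L) (m : Fin n) :
    I.mrank m (M m) ≤ I.mrank m (M' m) := by
  by_cases hm : m ∈ L.map Prod.fst
  · obtain ⟨p, hp, rfl⟩ := List.mem_map.1 hm
    obtain ⟨i, rfl⟩ := List.get_of_mem hp
    have h2 : M (L.get i).1 = (L.get i).2 := h.exposed.matched _ (get_mem' _ _)
    rw [h2, h.moves i]
    exact le_of_lt (h.exposed.cond1 i)
  · rw [h.fixes hm]

/-- men in the rotation get strictly worse -/
theorem elim_rank_lt (h : I.Elim M M' L) {m : Fin n} (hm : m ∈ L.map Prod.fst) :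
    I.mrank m (M m) < I.mrank m (M' m) := by
  obtain ⟨p, hp, rfl⟩ := List.mem_map.1 hm
  obtain ⟨i, rfl⟩ := List.get_of_mem hp
  have h2 : M (L.get i).1 = (L.get i).2 := h.exposed.matched _ (get_mem' _ _)
  rw [h2, h.moves i]
  exact h.exposed.cond1 i

/-- women get (weakly) better under elimination -/
theorem elim_wrank_le (h : I.Elim M M' L) (w : Fin n) :
    I.wrank w (M'.symm w) ≤ I.wrank w (M.symm w) := by
  set m₂ := M'.symm w with hm₂
  have hw : M' m₂ = w := M'.apply_symm_apply w
  by_cases hm : m₂ ∈ L.map Prod.fst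
  · obtain ⟨p, hp, hpe⟩ := List.mem_map.1 hm
    obtain ⟨i, hie⟩ := List.get_of_mem hp
    rw [← hie] at hpe
    have h1 := h.moves i
    rw [hpe, hw] at h1
    have h2 : M.symm (L.get (nxt L i)).2 = (L.get (nxt L i)).1 :=
      h.exposed.symm_eq (get_mem' _ _)
    rw [h1, h2, ← hpe]
    exact le_of_lt (h.exposed.cond2 i)
  · have := h.fixes hm
    rw [hw] at this
    have hsym : M.symm w = m₂ := by rw [this, Equiv.symm_apply_apply]
    rw [hsym]

theorem elimSeq_rank_le {Ls : List (List (Fin n × Fin n))} (h : I.ElimSeq M Ls M')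
    (m : Fin n) : I.mrank m (M m) ≤ I.mrank m (M' m) := by
  induction Ls generalizing M with
  | nil => rw [show M' = M from h]
  | cons L rest ih =>
    obtain ⟨Mmid, hE, hseq⟩ := h
    exact le_trans (elim_rank_le hE m) (ih hseq)

/-- every rotation eliminated along a sequence has a pair strictly improved upon at the end -/
theorem elimSeq_mem_worsens {Ls : List (List (Fin n × Fin n))} {K : List (Fin n × Fin n)}
    (h : I.ElimSeq M Ls M') (hK : K ∈ Ls) :
    ∃ p : Fin n × Fin n, p ∈ K ∧ I.mrank p.1 (M p.1) ≤ I.mrank p.1 p.2 ∧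
      I.mrank p.1 p.2 < I.mrank p.1 (M' p.1) := by
  induction Ls generalizing M with
  | nil => exact absurd hK List.not_mem_nil
  | cons L rest ih =>
    obtain ⟨Mmid, hE, hseq⟩ := h
    rcases List.mem_cons.1 hK with rfl | hK'
    · have hlen : 0 < K.length := lt_of_lt_of_le (by norm_num) hE.exposed.len2
      refine ⟨K.get ⟨0, hlen⟩, get_mem' _ _, ?_, ?_⟩
      · rw [hE.exposed.matched _ (get_mem' _ _)]
      · have h1 : I.mrank (K.get ⟨0, hlen⟩).1 (K.get ⟨0, hlen⟩).2 <
            I.mrank (K.get ⟨0, hlen⟩).1 (Mmid (K.get ⟨0, hlen⟩).1) := by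
          rw [← hE.exposed.matched _ (get_mem' _ _)]
          exact elim_rank_lt hE (List.mem_map.2 ⟨_, get_mem' _ _, rfl⟩)
        exact lt_of_lt_of_le h1 (elimSeq_rank_le hseq _)
    · obtain ⟨p, hp, h1, h2⟩ := ih hseq hK'
      exact ⟨p, hp, le_trans (elim_rank_le hE _) h1, h2⟩


theorem snd_disjoint {K : List (Fin n × Fin n)} (hK : I.ExposedIn M K)
    (hL : I.ExposedIn M L) (hne : K.toFinset ≠ L.toFinset) (w : Fin n)
    (h1 : w ∈ K.map Prod.snd) (h2 : w ∈ L.map Prod.snd) : False := by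
  obtain ⟨p, hp, hpe⟩ := List.mem_map.1 h1
  obtain ⟨q, hq, hqe⟩ := List.mem_map.1 h2
  have h3 : M p.1 = p.2 := hK.matched p hp
  have h4 : M q.1 = q.2 := hL.matched q hq
  have : p.1 = q.1 := M.injective (by rw [h3, h4, hpe, hqe])
  exact disjoint_men_of_ne hK hL hne (List.mem_map.2 ⟨p, hp, rfl⟩)
    (List.mem_map.2 ⟨q, hq, this.symm⟩)

theorem fst_disjoint {K : List (Fin n × Fin n)} (hK : I.ExposedIn M K)
    (hL : I.ExposedIn M L) (hne : K.toFinset ≠ L.toFinset) {m : Fin n}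
    (h1 : m ∈ L.map Prod.fst) : m ∉ K.map Prod.fst := fun h2 =>
  disjoint_men_of_ne hK hL hne h2 h1

/-- a rotation distinct from the eliminated one survives the elimination -/
theorem exposed_after_elim {K : List (Fin n × Fin n)} {M' : Fin n ≃ Fin n}
    (hL : I.ExposedIn M L) (hE : I.Elim M M' K) (hne : K.toFinset ≠ L.toFinset) :
    I.ExposedIn M' L := by
  have hK := hE.exposed
  have hmatch : ∀ p ∈ L, M' p.1 = p.2 := by
    intro p hp
    rw [hE.fixes (fst_disjoint hK hL hne (List.mem_map.2 ⟨p, hp, rfl⟩))]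
    exact hL.matched p hp
  refine ExposedIn.of_conds hL.len2 hL.ndfst hmatch fun i => ⟨hL.cond1 i, hL.cond2 i, ?_⟩
  intro w hw1 hw2 hw3
  have hold := hL.cond3 i w hw1 hw2
  have hle := elim_wrank_le hE w
  exact hold (lt_of_lt_of_le hw3 hle)

theorem elimPerm_comm {K : List (Fin n × Fin n)}
    (hK : I.ExposedIn M K) (hL : I.ExposedIn M L) (hne : K.toFinset ≠ L.toFinset)
    (w : Fin n) : elimPerm K (elimPerm L w) = elimPerm L (elimPerm K w) := by
  by_cases h1 : w ∈ K.map Prod.snd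
  · have h2 : w ∉ L.map Prod.snd := fun h2 => snd_disjoint hK hL hne w h1 h2
    have h3 : elimPerm K w ∈ K.map Prod.snd := List.formPerm_apply_mem_of_mem h1
    have h4 : elimPerm K w ∉ L.map Prod.snd := fun h4 => snd_disjoint hK hL hne _ h3 h4
    rw [elimPerm_fix w h2, elimPerm_fix _ h4]
  · by_cases h2 : w ∈ L.map Prod.snd
    · have h3 : elimPerm L w ∈ L.map Prod.snd := List.formPerm_apply_mem_of_mem h2
      have h4 : elimPerm L w ∉ K.map Prod.snd := fun h4 => snd_disjoint hK hL hne _ h4 h3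
      rw [elimPerm_fix w h1, elimPerm_fix _ h4]
    · simp [elimPerm_fix w h1, elimPerm_fix w h2]

/-- bring an exposed rotation to the front of an elimination sequence -/
theorem bring_to_front {Ls : List (List (Fin n × Fin n))} {K : List (Fin n × Fin n)}
    {N M : Fin n ≃ Fin n} (h : I.ElimSeq N Ls M) (hK : I.ExposedIn N K)
    (hmem : K.toFinset ∈ Ls.map List.toFinset) :
    ∃ Ls', I.ElimSeq (N.trans (elimPerm K)) Ls' M ∧
      (Ls.map List.toFinset).Perm (K.toFinset :: Ls'.map List.toFinset) := by
  induction Ls generalizing N with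
  | nil => simp at hmem
  | cons L rest ih =>
    obtain ⟨Mmid, hE, hseq⟩ := h
    by_cases hc : K.toFinset = L.toFinset
    · have hEK : I.Elim N Mmid K := elim_congr hE hK hc
      have : Mmid = N.trans (elimPerm K) := elim_eq_trans hEK
      refine ⟨rest, this ▸ hseq, ?_⟩
      simp only [List.map_cons, hc]
      exact List.Perm.refl _
    · have hmem' : K.toFinset ∈ rest.map List.toFinset := by
        simp only [List.map_cons, List.mem_cons, List.mem_map] at hmem
        exact List.mem_map.2 (hmem.resolve_left hc)
      have hKmid : I.ExposedIn Mmid K :=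
        exposed_after_elim hK hE (fun h' => hc h'.symm)
      obtain ⟨rest', hseq', hperm⟩ := ih hseq hKmid hmem'
      have hLN : I.ExposedIn (N.trans (elimPerm K)) L :=
        exposed_after_elim hE.exposed (elim_of_exposed hK) hc
      have hMmid : Mmid = N.trans (elimPerm L) := elim_eq_trans hE
      have hcomm : (N.trans (elimPerm K)).trans (elimPerm L) = Mmid.trans (elimPerm K) := by
        refine Equiv.ext fun w => ?_
        simp only [Equiv.trans_apply, hMmid]
        exact elimPerm_comm hE.exposed hK (fun h' => hc h'.symm) (N w)
      refine ⟨L :: rest', ⟨(N.trans (elimPerm K)).trans (elimPerm L),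
        elim_of_exposed hLN, ?_⟩, ?_⟩
      · rw [hcomm]; exact hseq'
      · simp only [List.map_cons]
        exact (hperm.cons _).trans (List.Perm.swap _ _ _)


theorem elimSeq_append {Ls Ls₂ : List (List (Fin n × Fin n))} {N Mmid M : Fin n ≃ Fin n}
    (h1 : I.ElimSeq N Ls Mmid) (h2 : I.ElimSeq Mmid Ls₂ M) :
    I.ElimSeq N (Ls ++ Ls₂) M := by
  induction Ls generalizing N with
  | nil => rw [show Mmid = N from h1] at h2; exact h2
  | cons L rest ih =>
    obtain ⟨Mm, hE, hseq⟩ := h1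
    exact ⟨Mm, hE, ih hseq⟩

/-- an exposed rotation never eliminated survives to the end -/
theorem exposed_survives {Ls : List (List (Fin n × Fin n))} {K : List (Fin n × Fin n)}
    {N M : Fin n ≃ Fin n} (hK : I.ExposedIn N K) (h : I.ElimSeq N Ls M)
    (hnot : K.toFinset ∉ Ls.map List.toFinset) : I.ExposedIn M K := by
  induction Ls generalizing N with
  | nil => rw [show M = N from h]; exact hK
  | cons L rest ih =>
    obtain ⟨Mmid, hE, hseq⟩ := h
    simp only [List.map_cons, List.mem_cons] at hnot
    push_neg at hnot
    exact ih (exposed_after_elim hK hE fun h' => hnot.1 (h'.symm ▸ rfl)) hseq hnot.2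

/-- an eliminated rotation's first pair is strictly worsened, so it cannot be
exposed at the end -/
theorem eliminated_not_exposed {Ls : List (List (Fin n × Fin n))}
    {K K' : List (Fin n × Fin n)} {N M : Fin n ≃ Fin n}
    (hE : I.Elim N Mmid K) (hseq : I.ElimSeq Mmid Ls M) (hK' : K' ∈ Ls)
    (hset : K'.toFinset = K.toFinset) : False := by
  obtain ⟨p, hp, h1, h2⟩ := elimSeq_mem_worsens hseq hK'
  have hpK : p ∈ K := List.mem_toFinset.1 (hset ▸ List.mem_toFinset.2 hp)
  have hm : N p.1 = p.2 := hE.exposed.matched p hpK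
  have hlt : I.mrank p.1 (N p.1) < I.mrank p.1 (Mmid p.1) :=
    elim_rank_lt hE (List.mem_map.2 ⟨p, hpK, rfl⟩)
  rw [hm] at hlt
  exact absurd h1 (not_le.2 hlt)

/-- uniqueness: any two elimination sequences between the same endpoints use the same
rotations (as sets of pairs), up to permutation -/
theorem seq_unique {Ls Ls' : List (List (Fin n × Fin n))} {N M : Fin n ≃ Fin n}
    (h : I.ElimSeq N Ls M) (h' : I.ElimSeq N Ls' M) :
    (Ls.map List.toFinset).Perm (Ls'.map List.toFinset) := by
  induction Ls generalizing N Ls' with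
  | nil =>
    cases Ls' with
    | nil => exact List.Perm.refl _
    | cons K r =>
      exfalso
      obtain ⟨p, hp, h1, h2⟩ := elimSeq_mem_worsens h' (show K ∈ K :: r from List.mem_cons_self)
      rw [show M = N from h] at h2
      exact absurd h1 (not_le.2 h2)
  | cons K rest ih =>
    obtain ⟨Mmid, hE, hseq⟩ := h
    have hmem : K.toFinset ∈ Ls'.map List.toFinset := by
      by_contra hnot
      have hexp : I.ExposedIn M K := exposed_survives hE.exposed h' hnot
      have hlen : 0 < K.length := lt_of_lt_of_le (by norm_num) hexp.len2
      set p := K.get ⟨0, hlen⟩ with hp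
      have h1 : M p.1 = p.2 := hexp.matched p (get_mem' _ _)
      have h2 : N p.1 = p.2 := hE.exposed.matched p (get_mem' _ _)
      have h3 : I.mrank p.1 (N p.1) < I.mrank p.1 (Mmid p.1) :=
        elim_rank_lt hE (List.mem_map.2 ⟨p, get_mem' _ _, rfl⟩)
      have h4 := elimSeq_rank_le hseq p.1
      rw [h1, h2] at *
      omega
    obtain ⟨Ls₂, hseq₂, hperm⟩ := bring_to_front h' hE.exposed hmem
    have : Mmid = N.trans (elimPerm K) := elim_eq_trans hE
    rw [← this] at hseq₂
    have := ih hseq hseq₂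
    simp only [List.map_cons]
    exact (this.cons K.toFinset).trans hperm.symm

/-- a sequence eliminating a subset of rotations yields a dominating matching -/
theorem subset_dominates_aux : ∀ (b : ℕ) {Ls Ls' : List (List (Fin n × Fin n))}
    {N M M' : Fin n ≃ Fin n}, Ls'.length ≤ b → I.ElimSeq N Ls M → I.ElimSeq N Ls' M' →
    (∀ R ∈ Ls.map List.toFinset, R ∈ Ls'.map List.toFinset) → I.Dominates M M' := by
  intro b
  induction b with
  | zero =>
    intro Ls Ls' N M M' hb h h' hsub
    interval_cases hLs' : Ls'.length
    rw [List.length_eq_zero_iff] at hLs'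
    subst hLs'
    cases Ls with
    | nil =>
      rw [show M = N from h, show M' = N from h']
      intro m; exact le_refl _
    | cons K rest => exact absurd (hsub K.toFinset (by simp)) (by simp)
  | succ b ihb =>
    intro Ls Ls' N M M' hb h h' hsub
    cases Ls with
    | nil =>
      rw [show M = N from h]
      exact fun m => elimSeq_rank_le h' m
    | cons K rest =>
      obtain ⟨Mmid, hE, hseq⟩ := h
      have hmem : K.toFinset ∈ Ls'.map List.toFinset := hsub _ (by simp)
      obtain ⟨Ls₂, hseq₂, hperm⟩ := bring_to_front h' hE.exposed hmem
      have hMmid : Mmid = N.trans (elimPerm K) := elim_eq_trans hE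
      rw [← hMmid] at hseq₂
      have hlen : Ls₂.length ≤ b := by
        have := hperm.length_eq
        simp only [List.length_map, List.length_cons] at this
        omega
      refine ihb hlen hseq hseq₂ ?_
      intro R hR
      have hRLs' : R ∈ Ls'.map List.toFinset := hsub R (by simp [hR])
      have : R ∈ K.toFinset :: Ls₂.map List.toFinset := hperm.mem_iff.1 hRLs'
      rcases List.mem_cons.1 this with rfl | hR2
      · exfalso
        obtain ⟨K', hK', hKe⟩ := List.mem_map.1 hR
        exact eliminated_not_exposed hE hseq hK' hKe
      · exact hR2

theorem subset_dominates {Ls Ls' : List (List (Fin n × Fin n))} {N M M' : Fin n ≃ Fin n}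
    (h : I.ElimSeq N Ls M) (h' : I.ElimSeq N Ls' M')
    (hsub : ∀ R ∈ Ls.map List.toFinset, R ∈ Ls'.map List.toFinset) : I.Dominates M M' :=
  subset_dominates_aux Ls'.length (le_refl _) h h' hsub


section toward

variable {N X : Fin n ≃ Fin n}

theorem cand_partner (hX : I.IsStable X) (hdom : I.Dominates N X) {m : Fin n}
    (h : N m ≠ X m) : I.Cand N m (X m) := by
  have hstrict : I.mrank m (N m) < I.mrank m (X m) :=
    lt_of_le_of_ne (hdom m) fun hc => h (I.mrank_inj m hc)
  refine ⟨hstrict, ?_⟩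
  set m' := N.symm (X m) with hm'
  have hNm' : N m' = X m := N.apply_symm_apply _
  have hmm' : m' ≠ m := fun hc => h (by rw [← hNm', hc])
  by_contra hc
  push_neg at hc
  have hne : I.wrank (X m) m' ≠ I.wrank (X m) m := fun hcc =>
    hmm' (I.wrank_inj _ hcc)
  have hlt : I.wrank (X m) m' < I.wrank (X m) m := lt_of_le_of_ne hc hne
  -- (m', X m) blocks X
  refine hX m' (X m) ⟨?_, ?_⟩
  · have h1 : I.mrank m' (N m') ≤ I.mrank m' (X m') := hdom m'
    rw [hNm'] at h1
    refine lt_of_le_of_ne h1 fun hc2 => ?_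
    have : X m = X m' := I.mrank_inj m' hc2
    exact hmm' (X.injective this.symm)
  · rwa [Equiv.symm_apply_apply]

theorem cand_min_exists (hX : I.IsStable X) (hdom : I.Dominates N X) {m : Fin n}
    (h : N m ≠ X m) : ∃ w, I.IsNext N m w ∧ I.mrank m w ≤ I.mrank m (X m) := by
  classical
  have hcand := cand_partner hX hdom h
  have hne : (Finset.univ.filter fun w => I.Cand N m w).Nonempty :=
    ⟨X m, Finset.mem_filter.2 ⟨Finset.mem_univ _, hcand⟩⟩
  obtain ⟨w, hw, hmin⟩ := Finset.exists_min_image _ (I.mrank m) hne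
  have hwc : I.Cand N m w := (Finset.mem_filter.1 hw).2
  refine ⟨w, ⟨hwc, fun w' hw' => hmin w' (Finset.mem_filter.2 ⟨Finset.mem_univ _, hw'⟩)⟩, ?_⟩
  exact hmin (X m) (Finset.mem_filter.2 ⟨Finset.mem_univ _, hcand⟩)

theorem isNext_partner_ne (hX : I.IsStable X) {m w : Fin n}
    (h : N m ≠ X m) (hw : I.IsNext N m w) (hle : I.mrank m w ≤ I.mrank m (X m)) :
    N (N.symm w) ≠ X (N.symm w) := by
  set m' := N.symm w with hm'
  have hNm' : N m' = w := N.apply_symm_apply _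
  intro heq
  have hXm' : X m' = w := by rw [← heq, hNm']
  have hXs : X.symm w = m' := by rw [← hXm', Equiv.symm_apply_apply]
  have hstrict : I.mrank m w < I.mrank m (X m) := by
    refine lt_of_le_of_ne hle fun hc => ?_
    have hwX : w = X m := I.mrank_inj m hc
    have : m' = m := X.injective (by rw [hXm', hwX])
    rw [this] at hNm'
    exact h (by rw [hNm', hwX])
  exact hX m w ⟨hstrict, by rw [hXs]; exact hw.1.2⟩


theorem exposed_toward (hX : I.IsStable X) (hdom : I.Dominates N X) (hne : N ≠ X) :
    ∃ (L : List (Fin n × Fin n)) (N' : Fin n ≃ Fin n),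
      I.Elim N N' L ∧ I.Dominates N' X := by
  classical
  have hD : ∃ m, N m ≠ X m := by
    by_contra hc; push_neg at hc; exact hne (Equiv.ext hc)
  set f : Fin n → Fin n := fun m =>
    if h : N m ≠ X m then N.symm (Classical.choose (cand_min_exists hX hdom h)) else m
    with hf
  have hfspec : ∀ m, N m ≠ X m → I.IsNext N m (N (f m)) ∧
      I.mrank m (N (f m)) ≤ I.mrank m (X m) := by
    intro m h
    have hsp := Classical.choose_spec (cand_min_exists hX hdom h)
    have hfm : f m = N.symm (Classical.choose (cand_min_exists hX hdom h)) := by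
      rw [hf]; simp only [dif_pos h]
    rw [hfm, N.apply_symm_apply]
    exact hsp
  have hfD : ∀ m, N m ≠ X m → N (f m) ≠ X (f m) := by
    intro m h
    have hs := hfspec m h
    have := isNext_partner_ne hX h hs.1 hs.2
    rwa [Equiv.symm_apply_apply] at this
  have hfne : ∀ m, N m ≠ X m → f m ≠ m := by
    intro m h hc
    have hs := hfspec m h
    rw [hc] at hs
    exact absurd hs.1.1.1 (lt_irrefl _)
  obtain ⟨m₀, hm₀⟩ := hD
  have horb : ∀ k, N (f^[k] m₀) ≠ X (f^[k] m₀) := by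
    intro k; induction k with
    | zero => simpa using hm₀
    | succ k ih => rw [Function.iterate_succ_apply']; exact hfD _ ih
  obtain ⟨a, b, hab, habeq⟩ := Finite.exists_ne_map_eq_of_infinite (fun k : ℕ => f^[k] m₀)
  wlog hlt : a < b generalizing a b
  · exact this b a hab.symm habeq.symm (by omega)
  set x := f^[a] m₀ with hx
  have hper : f^[b - a] x = x := by
    rw [hx, ← Function.iterate_add_apply]
    have : b - a + a = b := by omega
    rw [this]
    exact habeq.symm
  have hPex : ∃ q, 0 < q ∧ f^[q] x = x := ⟨b - a, by omega, hper⟩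
  set p' := Nat.find hPex with hp'
  have hp0 : 0 < p' := (Nat.find_spec hPex).1
  have hpfix : f^[p'] x = x := (Nat.find_spec hPex).2
  have hmin : ∀ q, q < p' → ¬(0 < q ∧ f^[q] x = x) := fun q hq => Nat.find_min hPex hq
  have horbx : ∀ k, N (f^[k] x) ≠ X (f^[k] x) := by
    intro k
    rw [hx, ← Function.iterate_add_apply]
    exact horb (k + a)
  have hp2 : 2 ≤ p' := by
    rcases Nat.lt_or_ge p' 2 with h2 | h2
    · exfalso
      have hp1 : p' = 1 := by omega
      have : f x = x := by rw [← Function.iterate_one f, ← hp1]; exact hpfix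
      exact hfne x (horbx 0 |>.imp id |> fun _ => by simpa using horbx 0) this
    · exact h2
  have hinj : ∀ k, k < p' → ∀ l, l < p' → f^[k] x = f^[l] x → k = l := by
    have key : ∀ k l, k < l → l < p' → f^[k] x = f^[l] x → False := by
      intro k l hkl hl heq
      have h1 : f^[p' - l + l] x = x := by
        have : p' - l + l = p' := by omega
        rw [this]; exact hpfix
      rw [Function.iterate_add_apply] at h1
      rw [← heq] at h1
      rw [← Function.iterate_add_apply] at h1
      exact hmin (p' - l + k) (by omega) ⟨by omega, h1⟩
    intro k hk l hl heq
    rcases lt_trichotomy k l with h | h | h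
    · exact absurd (key k l h hl heq) not_false
    · exact h
    · exact absurd (key l k h hk heq.symm) not_false
  set L : List (Fin n × Fin n) := (List.range p').map fun k => (f^[k] x, N (f^[k] x))
    with hL
  have hlen : L.length = p' := by simp [hL]
  have hget : ∀ (i : ℕ) (hi : i < L.length), L.get ⟨i, hi⟩ = (f^[i] x, N (f^[i] x)) := by
    intro i hi
    simp [hL, List.get_eq_getElem]
  have hnxtit : ∀ (k : ℕ), k < p' → f^[(k + 1) % p'] x = f (f^[k] x) := by
    intro k hk
    rcases Nat.lt_or_ge (k + 1) p' with h | h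
    · rw [Nat.mod_eq_of_lt h, Function.iterate_succ_apply']
    · have hk1 : k + 1 = p' := by omega
      rw [hk1, Nat.mod_self]
      have : f (f^[k] x) = f^[k + 1] x := (Function.iterate_succ_apply' f k x).symm
      rw [this, hk1, hpfix]
      rfl
  have hndf : (L.map Prod.fst).Nodup := by
    have : L.map Prod.fst = (List.range p').map fun k => f^[k] x := by
      rw [hL, List.map_map]
      exact List.map_congr_left fun k _ => rfl
    rw [this]
    refine List.Nodup.map_on ?_ List.nodup_range
    intro k hk l hl heq
    exact hinj k (List.mem_range.1 hk) l (List.mem_range.1 hl) heq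
  have hmatched : ∀ p ∈ L, N p.1 = p.2 := by
    intro p hp
    obtain ⟨k, hk, rfl⟩ := List.mem_map.1 hp
    rfl
  have hnxtget : ∀ i : Fin L.length,
      L.get (nxt L i) = (f (f^[i.1] x), N (f (f^[i.1] x))) := by
    intro i
    have h1 : (nxt L i).1 = (i.1 + 1) % p' := by simp [nxt, hlen]
    have h2 := hget (nxt L i).1 (nxt L i).2
    have h3 : f^[(nxt L i).1] x = f (f^[i.1] x) := by
      rw [h1]; exact hnxtit i.1 (by rw [← hlen]; exact i.2)
    rw [h3] at h2
    exact h2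
  have hgeti : ∀ i : Fin L.length, L.get i = (f^[i.1] x, N (f^[i.1] x)) := fun i =>
    hget i.1 i.2
  have hexp : I.ExposedIn N L := by
    refine ExposedIn.of_conds (by rw [hlen]; exact hp2) hndf hmatched ?_
    intro i
    have hDi := horbx i.1
    have hs := hfspec _ hDi
    have hgi := hgeti i
    have hgn := hnxtget i
    refine ⟨?_, ?_, ?_⟩
    · rw [hgi, hgn]
      exact hs.1.1.1
    · rw [hgi, hgn]
      have := hs.1.1.2
      rwa [Equiv.symm_apply_apply] at this
    · intro w hw1 hw2
      rw [hgi] at hw1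
      rw [hgi, hgn] at hw2
      intro hw3
      rw [hgi] at hw3
      have hcand : I.Cand N (f^[i.1] x) w := ⟨hw1, hw3⟩
      exact absurd (hs.1.2 w hcand) (not_le.2 hw2)
  refine ⟨L, N.trans (elimPerm L), elim_of_exposed hexp, ?_⟩
  intro m
  by_cases hm : m ∈ L.map Prod.fst
  · obtain ⟨p, hp, rfl⟩ := List.mem_map.1 hm
    obtain ⟨i, rfl⟩ := List.get_of_mem hp
    have hmv := (elim_of_exposed hexp).moves i
    rw [hmv, hnxtget i, hgeti i]
    exact (hfspec _ (horbx i.1)).2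
  · rw [(elim_of_exposed hexp).fixes hm]
    exact hdom m

/-- total men's rank sum -/
def msum (I : SMInst n) (N : Fin n ≃ Fin n) : ℕ := ∑ m, I.mrank m (N m)

theorem elim_msum_lt {N N' : Fin n ≃ Fin n} {L : List (Fin n × Fin n)}
    (hE : I.Elim N N' L) : msum I N < msum I N' := by
  have hlen : 0 < L.length := lt_of_lt_of_le (by norm_num) hE.exposed.len2
  refine Finset.sum_lt_sum (fun m _ => elim_rank_le hE m) ?_
  exact ⟨(L.get ⟨0, hlen⟩).1, Finset.mem_univ _,
    elim_rank_lt hE (List.mem_map.2 ⟨_, get_mem' _ _, rfl⟩)⟩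

theorem dominates_msum_le {N X : Fin n ≃ Fin n} (h : I.Dominates N X) :
    msum I N ≤ msum I X :=
  Finset.sum_le_sum fun m _ => h m

theorem reach_dominated_aux : ∀ (b : ℕ) {N X : Fin n ≃ Fin n}, I.IsStable X →
    I.Dominates N X → msum I X - msum I N ≤ b → ∃ Ls, I.ElimSeq N Ls X := by
  intro b
  induction b with
  | zero =>
    intro N X hX hdom hb
    by_cases h : N = X
    · exact ⟨[], h.symm⟩
    · exfalso
      obtain ⟨L, N', hE, hdom'⟩ := exposed_toward hX hdom h
      have h1 := elim_msum_lt hE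
      have h2 := dominates_msum_le hdom'
      omega
  | succ b ih =>
    intro N X hX hdom hb
    by_cases h : N = X
    · exact ⟨[], h.symm⟩
    · obtain ⟨L, N', hE, hdom'⟩ := exposed_toward hX hdom h
      have h1 := elim_msum_lt hE
      have h2 := dominates_msum_le hdom'
      obtain ⟨Ls, hLs⟩ := ih hX hdom' (by omega)
      exact ⟨L :: Ls, N', hE, hLs⟩

theorem reach_dominated {N X : Fin n ≃ Fin n} (hX : I.IsStable X)
    (hdom : I.Dominates N X) : ∃ Ls, I.ElimSeq N Ls X :=
  reach_dominated_aux (msum I X - msum I N) hX hdom (le_refl _)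


section lattice

variable {X Y : Fin n ≃ Fin n}

/-- if a man prefers his X-partner, she prefers her Y-partner -/
theorem lemW (hY : I.IsStable Y) {m : Fin n}
    (h : I.mrank m (X m) < I.mrank m (Y m)) :
    I.wrank (X m) (Y.symm (X m)) < I.wrank (X m) m := by
  set w := X m with hw
  set m' := Y.symm w with hm'
  have hYm' : Y m' = w := Y.apply_symm_apply w
  have hne : m' ≠ m := by
    intro hc
    rw [hc] at hYm'
    rw [hYm'] at h
    exact lt_irrefl _ h
  by_contra hcon
  push_neg at hcon
  have hstrict : I.wrank w m < I.wrank w m' :=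
    lt_of_le_of_ne hcon fun hc => hne (I.wrank_inj w hc).symm
  exact hY m w ⟨h, by rw [← hm']; exact hstrict⟩

theorem join_helper (hX : I.IsStable X) (hY : I.IsStable Y) {m m' w : Fin n}
    (h1 : X m = w) (h2 : I.mrank m (X m) ≤ I.mrank m (Y m)) (h3 : Y m' = w)
    (h4 : I.mrank m' (Y m') < I.mrank m' (X m')) (h5 : m ≠ m') : False := by
  have hYm : Y m ≠ w := fun hc => h5 (Y.injective (hc.trans h3.symm))
  have hstrict : I.mrank m (X m) < I.mrank m (Y m) := by
    refine lt_of_le_of_ne h2 fun hc => hYm ?_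
    rw [← h1]; exact (I.mrank_inj m hc).symm
  have W1 := lemW hY hstrict
  have hYs : Y.symm w = m' := by rw [← h3, Equiv.symm_apply_apply]
  rw [h1, hYs] at W1
  have W2 := lemW (X := Y) (Y := X) hX h4
  have hXs : X.symm w = m := by rw [← h1, Equiv.symm_apply_apply]
  rw [h3, hXs] at W2
  omega

theorem join_exists (hX : I.IsStable X) (hY : I.IsStable Y) :
    ∃ J : Fin n ≃ Fin n, ∀ m, (J m = X m ∨ J m = Y m) ∧
      I.mrank m (X m) ≤ I.mrank m (J m) ∧ I.mrank m (Y m) ≤ I.mrank m (J m) := by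
  classical
  set worse : Fin n → Fin n := fun m =>
    if I.mrank m (X m) ≤ I.mrank m (Y m) then Y m else X m with hworse
  have hsurj : Function.Surjective worse := by
    intro w
    have hXa : X (X.symm w) = w := X.apply_symm_apply w
    have hYb : Y (Y.symm w) = w := Y.apply_symm_apply w
    by_cases hab : X.symm w = Y.symm w
    · refine ⟨X.symm w, ?_⟩
      by_cases hc : I.mrank (X.symm w) (X (X.symm w)) ≤ I.mrank (X.symm w) (Y (X.symm w))
      · rw [hworse]; simp only [if_pos hc]; rw [hab]; exact hYb
      · rw [hworse]; simp only [if_neg hc]; exact hXa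
    · by_cases hc : I.mrank (Y.symm w) (X (Y.symm w)) ≤ I.mrank (Y.symm w) (Y (Y.symm w))
      · exact ⟨Y.symm w, by rw [hworse]; simp only [if_pos hc]; exact hYb⟩
      · push_neg at hc
        by_cases hc2 : I.mrank (X.symm w) (X (X.symm w)) ≤ I.mrank (X.symm w) (Y (X.symm w))
        · exfalso
          refine join_helper hX hY hXa hc2 hYb ?_ hab
          rw [hYb] at hc ⊢
          exact hc
        · push_neg at hc2
          exact ⟨X.symm w, by rw [hworse]; simp only [if_neg (not_le.2 hc2)]; exact hXa⟩
  have hbij : Function.Bijective worse := Finite.surjective_iff_bijective.1 hsurj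
  refine ⟨Equiv.ofBijective worse hbij, fun m => ?_⟩
  have hJm : Equiv.ofBijective worse hbij m = worse m := rfl
  rw [hJm, hworse]
  by_cases hc : I.mrank m (X m) ≤ I.mrank m (Y m)
  · simp only [if_pos hc]
    exact ⟨Or.inr trivial, hc, le_refl _⟩
  · push_neg at hc
    simp only [if_neg (not_le.2 hc)]
    exact ⟨Or.inl trivial, le_refl _, le_of_lt hc⟩

theorem join_stable_aux {J : Fin n ≃ Fin n} (hX : I.IsStable X) (hY : I.IsStable Y)
    (hJ : ∀ m, (J m = X m ∨ J m = Y m) ∧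
      I.mrank m (X m) ≤ I.mrank m (J m) ∧ I.mrank m (Y m) ≤ I.mrank m (J m))
    {m w : Fin n} (hb : I.Blocks J m w)
    (hcase : J (J.symm w) = X (J.symm w)) : False := by
  set ms := J.symm w with hms
  have hJms : J ms = w := J.apply_symm_apply w
  have hXms : X ms = w := by rw [← hcase, hJms]
  have hXs : X.symm w = ms := by rw [← hXms, Equiv.symm_apply_apply]
  obtain ⟨hb1, hb2⟩ := hb
  rcases (hJ m).1 with hJm | hJm
  · -- J m = X m : (m, w) blocks X
    rw [hJm] at hb1
    exact hX m w ⟨hb1, by rw [hXs]; exact hb2⟩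
  · -- J m = Y m
    rw [hJm] at hb1
    by_cases hbm : Y.symm w = ms
    · -- Y ms = w as well : blocks Y
      exact hY m w ⟨hb1, by rw [hbm]; exact hb2⟩
    · set b := Y.symm w with hbdef
      have hYb : Y b = w := Y.apply_symm_apply w
      -- J b = X b, and Y b is strictly better for b
      have hJb : J b = X b := by
        rcases (hJ b).1 with h' | h'
        · exact h'
        · exfalso
          apply hbm
          have hJbw : J b = w := by rw [h', hYb]
          rw [hms, ← hJbw, Equiv.symm_apply_apply]
      have hXbne : X b ≠ w := by
        intro hc
        apply hbm
        have hb' : b = X.symm w := by rw [← hc, Equiv.symm_apply_apply]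
        rw [hb', hXs]
      have hYXb : I.mrank b (Y b) < I.mrank b (X b) := by
        have h1 := (hJ b).2.2
        rw [hJb] at h1
        refine lt_of_le_of_ne h1 fun hc => hXbne ?_
        rw [← hYb]; exact (I.mrank_inj b hc).symm
      -- trichotomy on w's ranking of b vs ms
      rcases lt_trichotomy (I.wrank w b) (I.wrank w ms) with ht | ht | ht
      · -- (b, w) blocks X
        refine hX b w ⟨?_, ?_⟩
        · rw [← hYb]; exact hYXb
        · rw [hXs]; exact ht
      · exact hbm (I.wrank_inj w ht)
      · -- (m, w) blocks Y
        exact hY m w ⟨hb1, lt_trans hb2 ht⟩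

theorem join_stable {J : Fin n ≃ Fin n} (hX : I.IsStable X) (hY : I.IsStable Y)
    (hJ : ∀ m, (J m = X m ∨ J m = Y m) ∧
      I.mrank m (X m) ≤ I.mrank m (J m) ∧ I.mrank m (Y m) ≤ I.mrank m (J m)) :
    I.IsStable J := by
  intro m w hb
  rcases (hJ (J.symm w)).1 with hcase | hcase
  · exact join_stable_aux hX hY hJ hb hcase
  · refine join_stable_aux hY hX (fun m' => ?_) hb hcase
    obtain ⟨h1, h2, h3⟩ := hJ m'
    exact ⟨h1.symm, h3, h2⟩

end lattice

end toward

end exposed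

end SMInst

/-- maximality of `M↑` among dominating repairs: any stable matching
avoiding `(m, w)`, dominating `M` and different from `M↑` must dominate `M↑`. -/
theorem up_repair_maximal {n : ℕ} (I : SMInst n)
    (M₀ M : Fin n ≃ Fin n) (hM₀ : I.IsManOptimal M₀) (hM : I.IsStable M)
    (S : Finset (Finset (Fin n × Fin n))) (hS : I.IsClosedF S)
    (hc : I.Corresponds M₀ S M) (m w : Fin n) (hmw : M m = w) (h0 : M₀ m ≠ w)
    (Lp : List (Fin n × Fin n)) (hLp : I.IsRotation Lp) (hprod : I.Produces Lp m w)
    (Sup : Finset (Finset (Fin n × Fin n)))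
    (hSup : ∀ R, R ∈ Sup ↔ R ∈ S ∧ ¬ (R = Lp.toFinset ∨ I.PrecedesR Lp.toFinset R))
    (Mu : Fin n ≃ Fin n) (hMu : I.IsStable Mu) (hcu : I.Corresponds M₀ Sup Mu)
    (Mx : Fin n ≃ Fin n) (hMx : I.IsStable Mx) (hxavoid : Mx m ≠ w)
    (hxdom : I.Dominates Mx M) (hxne : Mx ≠ Mu) :
    I.Dominates Mx Mu := by
  classical
  obtain ⟨LsS, hndS, hsetS, hseqS⟩ := hc
  obtain ⟨Lsu, hndu, hsetu, hsequ⟩ := hcu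
  by_contra hcon
  simp only [SMInst.Dominates, not_forall, not_le] at hcon
  obtain ⟨m₁, hm₁⟩ := hcon
  -- Mu dominates M since Sup ⊆ S
  have hsub : ∀ R ∈ Lsu.map List.toFinset, R ∈ LsS.map List.toFinset := by
    intro R hR
    have h1 : R ∈ Sup := by rw [← hsetu]; exact List.mem_toFinset.2 hR
    have h2 : R ∈ S := ((hSup R).1 h1).1
    rw [← hsetS] at h2
    exact List.mem_toFinset.1 h2
  have hdomMuM : I.Dominates Mu M := SMInst.subset_dominates hsequ hseqS hsub
  -- the join of Mx and Mu
  obtain ⟨J, hJ⟩ := SMInst.join_exists hMx hMu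
  have hJstable : I.IsStable J := SMInst.join_stable hMx hMu hJ
  have hdomMuJ : I.Dominates Mu J := fun m' => (hJ m').2.2
  have hdomJM : I.Dominates J M := by
    intro m'
    rcases (hJ m').1 with h' | h'
    · rw [h']; exact hxdom m'
    · rw [h']; exact hdomMuM m'
  have hneMuJ : Mu ≠ J := by
    intro heq
    have := (hJ m₁).2.1
    rw [← heq] at this
    omega
  -- step from Mu toward J, then continue to M
  obtain ⟨Lσ, N₁, hElim, hdomN₁J⟩ := SMInst.exposed_toward hJstable hdomMuJ hneMuJ
  have hdomN₁M : I.Dominates N₁ M := fun m' => le_trans (hdomN₁J m') (hdomJM m')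
  obtain ⟨Ls₁, hLs₁⟩ := SMInst.reach_dominated hM hdomN₁M
  have hfull : I.ElimSeq M₀ (Lsu ++ (Lσ :: Ls₁)) M :=
    SMInst.elimSeq_append hsequ ⟨N₁, hElim, hLs₁⟩
  have hperm := SMInst.seq_unique hfull hseqS
  -- Lσ's pair set belongs to S
  have hσS : Lσ.toFinset ∈ S := by
    have h1 : Lσ.toFinset ∈ (Lsu ++ (Lσ :: Ls₁)).map List.toFinset := by
      simp
    have h2 := hperm.mem_iff.1 h1
    rw [← hsetS]
    exact List.mem_toFinset.2 h2
  -- but not to Sup (it was exposed in Mu, after all of Sup was eliminated)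
  have hσSup : Lσ.toFinset ∉ Sup := by
    intro hin
    rw [← hsetu] at hin
    obtain ⟨K, hK, hKe⟩ := List.mem_map.1 (List.mem_toFinset.1 hin)
    obtain ⟨p, hp, h1, h2⟩ := SMInst.elimSeq_mem_worsens hsequ hK
    have hpσ : p ∈ Lσ := by
      have : p ∈ K.toFinset := List.mem_toFinset.2 hp
      rw [hKe] at this
      exact List.mem_toFinset.1 this
    have : Mu p.1 = p.2 := hElim.exposed.matched p hpσ
    rw [this] at h2
    omega
  have hdisj : Lσ.toFinset = Lp.toFinset ∨ I.PrecedesR Lp.toFinset Lσ.toFinset := by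
    by_contra hno
    exact hσSup ((hSup _).2 ⟨hσS, hno⟩)
  rcases hdisj with hA | hB
  · -- case A: Lσ is the producing rotation; N₁ matches m to w, contradiction
    obtain ⟨M'', hM''stable, hexpM''⟩ := hLp
    have hexpLpMu : I.ExposedIn Mu Lp :=
      SMInst.exposed_transfer hElim.exposed hexpM'' hA
    obtain ⟨i, hi1, hi2⟩ := hprod
    have hElimLp : I.Elim Mu N₁ Lp :=
      SMInst.elim_congr hElim hexpLpMu hA.symm
    have hN₁m : N₁ m = w := by
      have := hElimLp.moves i
      rw [hi1] at this
      rw [this]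
      exact hi2
    have hMum : Mu m = (Lp.get i).2 := by
      have := hexpLpMu.matched _ (SMInst.get_mem' Lp i)
      rw [hi1] at this
      exact this
    have hMuw : I.mrank m (Mu m) < I.mrank m w := by
      have := hexpLpMu.cond1 i
      rw [hi1] at this
      rw [hMum, ← hi2]
      exact this
    have hMxw : I.mrank m (Mx m) < I.mrank m w := by
      have h1 : I.mrank m (Mx m) ≤ I.mrank m (M m) := hxdom m
      rw [hmw] at h1
      refine lt_of_le_of_ne h1 fun hc' => hxavoid (I.mrank_inj m hc')
    have hJw : I.mrank m (J m) < I.mrank m w := by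
      rcases (hJ m).1 with h' | h' <;> rw [h']
      · exact hMxw
      · exact hMuw
    have := hdomN₁J m
    rw [hN₁m] at this
    omega
  · -- case B: Lp precedes Lσ, so Lp would have been eliminated within Sup
    obtain ⟨L', Lr, hrot', hrotr, hset', hsetr, hprec⟩ := hB
    obtain ⟨Mr, hMrstable, hexpMr⟩ := hrotr
    have hexpLrMu : I.ExposedIn Mu Lr :=
      SMInst.exposed_transfer hElim.exposed hexpMr hsetr.symm
    obtain ⟨K, hK, hKe⟩ := hprec M₀ Lsu Mu hM₀ hsequ hMu hexpLrMu
    have hin : Lp.toFinset ∈ Sup := by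
      rw [← hsetu]
      refine List.mem_toFinset.2 ?_
      rw [← hset', ← hKe]
      exact List.mem_map.2 ⟨K, hK, rfl⟩
    have := (hSup Lp.toFinset).1 hin
    exact this.2 (Or.inl rfl)
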